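/- arXiv:2604.03017 — 2 statements merged into one kernel-verified Lean document; each statement's English description precedes it below -/
import Mathlib

section
/- Certified quantitative lens composition with added slack: let (w♯₁, w₁) and (w♯₂, w₂) be composable lenses with real-valued assumption/guarantee functions (αᵢ, γᵢ) and slacks κ₁, κ₂ : ℝ≥0 → ℝ≥0. Suppose each κᵢ is monotone and subadditive-compatible in the sense that the inequalities below make sense pointwise. If α₂(w₁ x, y) + κ₁(γ₁ x) ≥ α₁(x, w♯₁(x, y)) and γ₁ x ≥ γ₂(w₁ x), and α₃(w₂ x', y') + κ₂(γ₂ x') ≥ α₂(x', w♯₂(x', y')) and γ₂ x' ≥ γ₃(w₂ x'), and κ₂ is monotone, then the composite lens satisfies α₃(w₂(w₁ x), y) + (κ₁ + κ₂)(γ₁ x) ≥ α₁(x, w♯₁(x, w♯₂(w₁ x, y))) and γ₁ x ≥ γ₃(w₂(w₁ x)). -/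
theorem quantitative_certified_comp {A₁ O₁ A₂ O₂ A₃ O₃ : Type*}
    (w₁ : O₁ → O₂) (wsh₁ : O₁ → A₂ → A₁)
    (w₂ : O₂ → O₃) (wsh₂ : O₂ → A₃ → A₂)
    (α₁ : O₁ → A₁ → ℝ) (γ₁ : O₁ → ℝ)
    (α₂ : O₂ → A₂ → ℝ) (γ₂ : O₂ → ℝ)
    (α₃ : O₃ → A₃ → ℝ) (γ₃ : O₃ → ℝ)
    (κ₁ κ₂ : ℝ → ℝ)
    (hκ₂ : Monotone κ₂)
    (h₁₁ : ∀ x y, α₂ (w₁ x) y + κ₁ (γ₁ x) ≥ α₁ x (wsh₁ x y))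
    (h₁₂ : ∀ x, γ₁ x ≥ γ₂ (w₁ x))
    (h₂₁ : ∀ x' y', α₃ (w₂ x') y' + κ₂ (γ₂ x') ≥ α₂ x' (wsh₂ x' y'))
    (h₂₂ : ∀ x', γ₂ x' ≥ γ₃ (w₂ x')) :
    (∀ x y, α₃ (w₂ (w₁ x)) y + (κ₁ (γ₁ x) + κ₂ (γ₁ x)) ≥
      α₁ x (wsh₁ x (wsh₂ (w₁ x) y))) ∧
    (∀ x, γ₁ x ≥ γ₃ (w₂ (w₁ x))) := by
  constructor
  · intro x y
    have h1 := h₁₁ x (wsh₂ (w₁ x) y)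
    have h2 := h₂₁ (w₁ x) y
    have h3 := hκ₂ (h₁₂ x)
    linarith
  · intro x
    exact le_trans (h₂₂ (w₁ x)) (h₁₂ x)
end

section
/- Sequential (cascade) composition of quantitatively certified systems: let α₁ : A → ℝ, γ₁ : M → ℝ, α₂ : M → ℝ, γ₂ : O → ℝ be nonnegative functions, and let κ : ℝ≥0 → ℝ≥0 be monotone with κ(γ₁ m) ≥ α₂ m for all m (assumption on the middle interface implied by the first guarantee via slack). Define the sequential lens (s♯, s) : (A × M, M × O) ⇆ (A, O) by s(m, o) = o and s♯((m, o), a) = (a, m). Then (s♯, s) is certified with slack κ by assumption (a, m) ↦ α₁ a + α₂ m, guarantee (m, o) ↦ γ₁ m + γ₂ o on the inside, and assumption α₁, guarantee γ₂ on the outside: that is, α₁ a + κ(γ₁ m + γ₂ o) ≥ α₁ a + α₂ m and γ₁ m + γ₂ o ≥ γ₂ o. -/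
theorem sequential_certified {A M O : Type*}
    (α₁ : A → ℝ) (γ₁ : M → ℝ) (α₂ : M → ℝ) (γ₂ : O → ℝ)
    (hα₁ : ∀ a, 0 ≤ α₁ a) (hγ₁ : ∀ m, 0 ≤ γ₁ m)
    (hα₂ : ∀ m, 0 ≤ α₂ m) (hγ₂ : ∀ o, 0 ≤ γ₂ o)
    (κ : ℝ → ℝ) (hκ : Monotone κ)
    (hmid : ∀ m, κ (γ₁ m) ≥ α₂ m) :
    (∀ (a : A) (m : M) (o : O), α₁ a + κ (γ₁ m + γ₂ o) ≥ α₁ a + α₂ m) ∧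
    (∀ (m : M) (o : O), γ₁ m + γ₂ o ≥ γ₂ o) := by
  constructor
  · intro a m o
    have h1 : κ (γ₁ m) ≤ κ (γ₁ m + γ₂ o) := hκ (by linarith [hγ₂ o])
    linarith [hmid m]
  · intro m o; linarith [hγ₁ m]
end
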